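/- For every irrational x ∈ (0,1) and every n ≥ 1, min(Θ_{n−1}(x), Θ_n(x), Θ_{n+1}(x)) < 1/√5. -/

import Mathlib

set_option maxHeartbeats 1000000

/-- The Gauss map `T_G(0) = 0`, `T_G(x) = {1/x}` for `x ≠ 0`. -/
noncomputable def TG (x : ℝ) : ℝ := if x = 0 then 0 else Int.fract (1 / x)

/-- `cfA x n = a_{n+1}(x) = ⌊1 / T_G^n(x)⌋`, the continued fraction digits of `x`. -/
noncomputable def cfA (x : ℝ) (n : ℕ) : ℤ := ⌊1 / (TG^[n] x)⌋

/-- `cfP x (n+1) = p_n(x)` : numerators of the convergents, with the index shift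
`cfP x 0 = p_{-1} = 1`, `cfP x 1 = p_0 = 0`, and `p_{n+1} = a_{n+1} p_n + p_{n-1}`. -/
noncomputable def cfP (x : ℝ) : ℕ → ℤ
  | 0 => 1
  | 1 => 0
  | (n + 2) => cfA x n * cfP x (n + 1) + cfP x n

/-- `cfQ x (n+1) = q_n(x)` : denominators of the convergents, with the index shift
`cfQ x 0 = q_{-1} = 0`, `cfQ x 1 = q_0 = 1`, and `q_{n+1} = a_{n+1} q_n + q_{n-1}`. -/
noncomputable def cfQ (x : ℝ) : ℕ → ℤ
  | 0 => 0
  | 1 => 1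
  | (n + 2) => cfA x n * cfQ x (n + 1) + cfQ x n

/-- The approximation coefficients `Θ_n(x) = q_n² · |x − p_n/q_n|`. -/
noncomputable def Theta (x : ℝ) (n : ℕ) : ℝ :=
  (cfQ x (n + 1) : ℝ) ^ 2 * |x - (cfP x (n + 1) : ℝ) / (cfQ x (n + 1) : ℝ)|

lemma TG_iter_mem {x : ℝ} (hx : x ∈ Set.Ioo (0:ℝ) 1) (hirr : Irrational x) (k : ℕ) :
    TG^[k] x ∈ Set.Ioo (0:ℝ) 1 ∧ Irrational (TG^[k] x) := by
  induction k with
  | zero => exact ⟨hx, hirr⟩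
  | succ k ih =>
    obtain ⟨⟨h0, h1⟩, hi⟩ := ih
    rw [Function.iterate_succ_apply']
    set y := TG^[k] x with hy
    have hyne : y ≠ 0 := ne_of_gt h0
    have hTG : TG y = Int.fract (1/y) := if_neg hyne
    have hinv : Irrational (1/y) := by rw [one_div]; exact hi.inv
    have hfr : Irrational (Int.fract (1/y)) := by unfold Int.fract; exact hinv.sub_intCast _
    refine ⟨⟨?_, ?_⟩, ?_⟩
    · rw [hTG]; exact Int.fract_pos.mpr (fun he => (hinv.ne_int ⌊1/y⌋) he)
    · rw [hTG]; exact Int.fract_lt_one _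
    · rw [hTG]; exact hfr

lemma TG_iter_succ {x : ℝ} (hx : x ∈ Set.Ioo (0:ℝ) 1) (hirr : Irrational x) (k : ℕ) :
    TG^[k+1] x = 1 / (TG^[k] x) - cfA x k := by
  have h0 := (TG_iter_mem hx hirr k).1.1
  rw [Function.iterate_succ_apply', TG, if_neg (ne_of_gt h0)]
  rfl

lemma cfA_pos {x : ℝ} (hx : x ∈ Set.Ioo (0:ℝ) 1) (hirr : Irrational x) (k : ℕ) :
    1 ≤ cfA x k := by
  obtain ⟨⟨h0, h1⟩, _⟩ := TG_iter_mem hx hirr k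
  have : (1:ℝ) < 1 / (TG^[k] x) := one_lt_one_div h0 h1
  exact Int.le_floor.mpr (by exact_mod_cast this.le)

lemma cfQ_facts {x : ℝ} (hx : x ∈ Set.Ioo (0:ℝ) 1) (hirr : Irrational x) (n : ℕ) :
    0 ≤ cfQ x n ∧ cfQ x n ≤ cfQ x (n+1) ∧ 1 ≤ cfQ x (n+1) := by
  induction n with
  | zero => refine ⟨le_refl 0, ?_, ?_⟩ <;> simp [cfQ]
  | succ n ih =>
    obtain ⟨h0, h1, h2⟩ := ih
    have ha := cfA_pos hx hirr n
    have hrec : cfQ x (n+2) = cfA x n * cfQ x (n+1) + cfQ x n := rfl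
    have hge : cfQ x (n+1) ≤ cfQ x (n+2) := by
      rw [hrec]; nlinarith
    exact ⟨by linarith, hge, le_trans h2 hge⟩

lemma cf_identity {x : ℝ} (hx : x ∈ Set.Ioo (0:ℝ) 1) (hirr : Irrational x) (n : ℕ) :
    x * ((cfQ x (n+1) : ℝ) + (cfQ x n : ℝ) * TG^[n] x)
      = (cfP x (n+1) : ℝ) + (cfP x n : ℝ) * TG^[n] x := by
  induction n with
  | zero => simp [cfP, cfQ]
  | succ n ih =>
    have ht := (TG_iter_mem hx hirr n).1.1
    have htne : (TG^[n] x) ≠ 0 := ne_of_gt ht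
    have hsucc := TG_iter_succ hx hirr n
    have hP : (cfP x (n+2) : ℝ) = (cfA x n : ℝ) * cfP x (n+1) + cfP x n := by
      push_cast [cfP]; ring
    have hQ : (cfQ x (n+2) : ℝ) = (cfA x n : ℝ) * cfQ x (n+1) + cfQ x n := by
      push_cast [cfQ]; ring
    rw [hsucc, hP, hQ]
    field_simp
    field_simp at ih
    ring_nf
    ring_nf at ih
    linarith [ih]

lemma cf_det (x : ℝ) (n : ℕ) :
    cfP x (n+1) * cfQ x n - cfP x n * cfQ x (n+1) = (-1)^(n+1) := by
  induction n with
  | zero => simp [cfP, cfQ]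
  | succ n ih =>
    have hP : cfP x (n+2) = cfA x n * cfP x (n+1) + cfP x n := rfl
    have hQ : cfQ x (n+2) = cfA x n * cfQ x (n+1) + cfQ x n := rfl
    rw [hP, hQ, pow_succ]
    nlinarith [ih]

lemma denom_pos {x : ℝ} (hx : x ∈ Set.Ioo (0:ℝ) 1) (hirr : Irrational x) (m : ℕ) :
    0 < (cfQ x (m+1) : ℝ) + (cfQ x m : ℝ) * TG^[m] x := by
  obtain ⟨h0, _, h2⟩ := cfQ_facts hx hirr m
  have ht := (TG_iter_mem hx hirr m).1.1
  have : (1:ℝ) ≤ (cfQ x (m+1) : ℝ) := by exact_mod_cast h2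
  have : (0:ℝ) ≤ (cfQ x m : ℝ) := by exact_mod_cast h0
  nlinarith

lemma theta_eq {x : ℝ} (hx : x ∈ Set.Ioo (0:ℝ) 1) (hirr : Irrational x) (m : ℕ) :
    Theta x m = (cfQ x (m+1) : ℝ) /
      ((cfQ x (m+2) : ℝ) + (cfQ x (m+1) : ℝ) * TG^[m+1] x) := by
  have hD := denom_pos hx hirr (m+1)
  have hQ1 : (1:ℝ) ≤ (cfQ x (m+1) : ℝ) := by exact_mod_cast (cfQ_facts hx hirr m).2.2
  have hQ1pos : (0:ℝ) < (cfQ x (m+1) : ℝ) := by linarith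
  have hid := cf_identity hx hirr (m+1)
  have hdet : (cfP x (m+2) : ℝ) * cfQ x (m+1) - cfP x (m+1) * cfQ x (m+2) = (-1)^(m+2) := by
    exact_mod_cast cf_det x (m+1)
  set D := (cfQ x (m+2) : ℝ) + (cfQ x (m+1) : ℝ) * TG^[m+1] x with hDdef
  have hxqp : (x * (cfQ x (m+1) : ℝ) - (cfP x (m+1) : ℝ)) * D = (-1)^(m+2) := by
    rw [hDdef]
    rw [hDdef] at hid
    linear_combination (cfQ x (m+1) : ℝ) * hid + hdet
  have habs : |x * (cfQ x (m+1) : ℝ) - (cfP x (m+1) : ℝ)| = 1 / D := by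
    have h1 : x * (cfQ x (m+1) : ℝ) - (cfP x (m+1) : ℝ) = (-1)^(m+2) / D :=
      eq_div_of_mul_eq (ne_of_gt hD) hxqp
    rw [h1, abs_div, abs_pow, abs_neg, abs_one, one_pow, abs_of_pos hD]
  unfold Theta
  have hsub : x - (cfP x (m+1) : ℝ) / (cfQ x (m+1) : ℝ)
      = (x * (cfQ x (m+1) : ℝ) - (cfP x (m+1) : ℝ)) / (cfQ x (m+1) : ℝ) := by
    field_simp
  rw [hsub, abs_div, abs_of_pos hQ1pos, habs]
  field_simp

lemma pair_lemma (s u v : ℝ) (hs : s^2 = 5) (hs2 : 2 < s)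
    (hu : 0 < u) (hv : 0 < v) (huv : u*v < 1)
    (A1 : 1 + u*v ≤ s*u) (A2 : 1 + u*v ≤ s*v) : 3 - s ≤ 2*(u*v) := by
  have hpos : (0:ℝ) < 1 + u*v := by nlinarith
  have key : (1+u*v)^2 ≤ 5*(u*v) := by nlinarith [mul_le_mul A1 A2 hpos.le (by nlinarith : (0:ℝ) ≤ s*u)]
  nlinarith [key, hs, huv, hs2]

lemma borel_algebra (s u v a : ℝ) (hs : s^2 = 5) (hs2 : 2 < s) (hs3 : s < 3)
    (hu : 0 < u) (hu1 : u ≤ 1) (hv : 0 < v) (hv1 : v < 1)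
    (ha : 1 ≤ a) (hao : a = 1 ∨ 2 ≤ a)
    (hv' : 0 < 1/v - a) (hv'1 : 1/v - a < 1)
    (A1 : 1 + u*v ≤ s*u) (A2 : 1 + u*v ≤ s*v)
    (B : (a+u) + (1/v - a) ≤ s * ((1/v - a) * (a+u))) :
    u = (s-1)/2 := by
  have hvinv : v * (1/v) = 1 := by field_simp
  have key1 : 3 - s ≤ 2*(u*v) :=
    pair_lemma s u v hs hs2 hu hv (by nlinarith) A1 A2
  have ha1 : a = 1 := by
    rcases hao with h | h
    · exact h
    · exfalso
      have h2v : 2*v < 1 := by nlinarith [hv']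
      nlinarith [key1, A2, hs, h2v, hv]
  subst ha1
  set v' := 1/v - 1 with hv'def
  set u' := 1/(1+u) with hu'def
  have hw : (0:ℝ) < 1 + u := by linarith
  have hu'pos : 0 < u' := by rw [hu'def]; positivity
  have hu'mul : u' * (1+u) = 1 := by rw [hu'def]; field_simp
  have hstep : (1+u) + v' ≤ s := by
    have : ((1+u) + v') * v ≤ s * v := by
      rw [hv'def]; nlinarith [A2, hvinv]
    exact le_of_mul_le_mul_right (by linarith [mul_comm ((1+u)+v') v]) hv
  have A1' : 1 + u'*v' ≤ s*u' := by
    have h1 : (1 + u'*v') * (1+u) ≤ (s*u') * (1+u) := by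
      nlinarith [hu'mul, hstep, hv']
    exact le_of_mul_le_mul_right h1 hw
  have A2' : 1 + u'*v' ≤ s*v' := by
    have h1 : (1 + u'*v') * (1+u) ≤ (s*v') * (1+u) := by
      nlinarith [hu'mul, B]
    exact le_of_mul_le_mul_right h1 hw
  have key2 : 3 - s ≤ 2*(u'*v') :=
    pair_lemma s u' v' hs hs2 hu'pos hv' (by nlinarith [hu'mul, hv'1, hu'pos]) A1' A2'
  have hvle : 2*v ≤ s - 1 := by
    have h1 := mul_le_mul_of_nonneg_right key2 hw.le
    have heq : 2*(u'*v')*(1+u) = 2*v' := by linear_combination 2*v' * hu'mul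
    have hk2 : (3-s)*(1+u) ≤ 2*v' := by linarith
    have h2 := mul_le_mul_of_nonneg_right hk2 hv.le
    have heq2 : 2*v'*v = 2*(1-v) := by rw [hv'def]; linear_combination 2*hvinv
    have hk3 : (3-s)*(v + u*v) ≤ 2*(1 - v) := by
      calc (3-s)*(v + u*v) = (3-s)*(1+u)*v := by ring
        _ ≤ 2*v'*v := h2
        _ = 2*(1-v) := heq2
    have h3 := mul_le_mul_of_nonneg_left key1 (by linarith : (0:ℝ) ≤ 3 - s)
    nlinarith [hk3, h3, hs]
  have hvge : s - 1 ≤ 2*v := by nlinarith [A2, key1, hs, hs2]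
  have hveq : v = (s-1)/2 := by linarith
  have huge : s - 1 ≤ 2*u := by nlinarith [A1, hveq, hs, hs2]
  have hule : 2*u ≤ s - 1 := by nlinarith [A2, hveq, hs, hs2]
  linarith

/-- Borel's theorem: for every irrational `x ∈ (0,1)` and every `n ≥ 1`,
`min(Θ_{n−1}, Θ_n, Θ_{n+1}) < 1/√5`. -/
theorem borel_min_theta (x : ℝ) (hx : x ∈ Set.Ioo (0 : ℝ) 1) (hirr : Irrational x)
    (n : ℕ) (hn : 1 ≤ n) :
    min (min (Theta x (n - 1)) (Theta x n)) (Theta x (n + 1)) < 1 / Real.sqrt 5 := by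
  by_contra hcon
  push_neg at hcon
  obtain ⟨m, rfl⟩ : ∃ m, n = m + 1 := ⟨n - 1, (Nat.succ_pred_eq_of_pos hn).symm⟩
  set s := Real.sqrt 5 with hsdef
  have hs : s^2 = 5 := Real.sq_sqrt (by norm_num)
  have hs2 : 2 < s := by
    rw [hsdef]
    rw [show (2:ℝ) = Real.sqrt 4 by rw [show (4:ℝ) = 2^2 by norm_num, Real.sqrt_sq]; norm_num]
    exact Real.sqrt_lt_sqrt (by norm_num) (by norm_num)
  have hs3 : s < 3 := by
    rw [hsdef]
    rw [show (3:ℝ) = Real.sqrt 9 by rw [show (9:ℝ) = 3^2 by norm_num, Real.sqrt_sq]; norm_num]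
    exact Real.sqrt_lt_sqrt (by norm_num) (by norm_num)
  have hspos : 0 < s := by linarith
  -- extract the three inequalities
  have hmin : 1/s ≤ Theta x m ∧ 1/s ≤ Theta x (m+1) ∧ 1/s ≤ Theta x (m+2) := by
    simp only [Nat.add_sub_cancel] at hcon
    exact ⟨le_trans hcon (min_le_of_left_le (min_le_left _ _)),
           le_trans hcon (min_le_of_left_le (min_le_right _ _)),
           le_trans hcon (min_le_right _ _)⟩
  obtain ⟨hT1, hT2, hT3⟩ := hmin
  -- notation
  have hQf1 := cfQ_facts hx hirr m
  have hQf2 := cfQ_facts hx hirr (m+1)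
  have hQf3 := cfQ_facts hx hirr (m+2)
  have hQf4 := cfQ_facts hx hirr (m+3)
  have hQ1pos : (0:ℝ) < (cfQ x (m+1) : ℝ) := by exact_mod_cast lt_of_lt_of_le zero_lt_one hQf1.2.2
  have hQ2pos : (0:ℝ) < (cfQ x (m+2) : ℝ) := by exact_mod_cast lt_of_lt_of_le zero_lt_one hQf2.2.2
  have hQ3pos : (0:ℝ) < (cfQ x (m+3) : ℝ) := by exact_mod_cast lt_of_lt_of_le zero_lt_one hQf3.2.2
  have hQ12 : (cfQ x (m+1) : ℝ) ≤ (cfQ x (m+2) : ℝ) := by exact_mod_cast hQf2.2.1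
  have ht1 := (TG_iter_mem hx hirr (m+1)).1
  have ht2m := (TG_iter_mem hx hirr (m+2)).1
  have ht3m := (TG_iter_mem hx hirr (m+3)).1
  set v := TG^[m+1] x with hvdef
  set t2 := TG^[m+2] x with ht2def
  set t3 := TG^[m+3] x with ht3def
  have hv : 0 < v := ht1.1
  have hv1 : v < 1 := ht1.2
  have ht2p : 0 < t2 := ht2m.1
  set a : ℝ := (cfA x (m+1) : ℝ) with hadef
  set a2 : ℝ := (cfA x (m+2) : ℝ) with ha2def
  have ht2eq : t2 = 1/v - a := TG_iter_succ hx hirr (m+1)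
  have ht3eq : t3 = 1/t2 - a2 := TG_iter_succ hx hirr (m+2)
  have recQ3 : (cfQ x (m+3) : ℝ) = a * (cfQ x (m+2) : ℝ) + (cfQ x (m+1) : ℝ) := by
    rw [hadef]; exact_mod_cast congrArg (Int.cast : ℤ → ℝ) (rfl : cfQ x (m+3) = cfA x (m+1) * cfQ x (m+2) + cfQ x (m+1))
  have recQ4 : (cfQ x (m+4) : ℝ) = a2 * (cfQ x (m+3) : ℝ) + (cfQ x (m+2) : ℝ) := by
    rw [ha2def]; exact_mod_cast congrArg (Int.cast : ℤ → ℝ) (rfl : cfQ x (m+4) = cfA x (m+2) * cfQ x (m+3) + cfQ x (m+2))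
  -- the three cross-multiplied inequalities
  have extract : ∀ k : ℕ, 1/s ≤ Theta x k →
      (cfQ x (k+2) : ℝ) + (cfQ x (k+1) : ℝ) * TG^[k+1] x ≤ s * (cfQ x (k+1) : ℝ) := by
    intro k hk
    rw [theta_eq hx hirr k] at hk
    have hD := denom_pos hx hirr (k+1)
    have := (div_le_div_iff₀ hspos hD).mp hk
    linarith [this]
  have I1 := extract m hT1
  have I2 := extract (m+1) hT2
  have I3 := extract (m+2) hT3
  rw [← hvdef] at I1
  rw [show m+1+2 = m+3 from rfl, show m+1+1 = m+2 from rfl, ← ht2def] at I2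
  rw [show m+2+2 = m+4 from rfl, show m+2+1 = m+3 from rfl, ← ht3def] at I3
  set u : ℝ := (cfQ x (m+1) : ℝ) / (cfQ x (m+2) : ℝ) with hudef
  have hQ2ne : (cfQ x (m+2) : ℝ) ≠ 0 := ne_of_gt hQ2pos
  have humul : u * (cfQ x (m+2) : ℝ) = (cfQ x (m+1) : ℝ) := div_mul_cancel₀ _ hQ2ne
  have hu : 0 < u := div_pos hQ1pos hQ2pos
  have hu1 : u ≤ 1 := by rw [hudef]; exact div_le_one_of_le₀ hQ12 hQ2pos.le
  have ha : (1:ℝ) ≤ a := by rw [hadef]; exact_mod_cast cfA_pos hx hirr (m+1)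
  have hao : a = 1 ∨ 2 ≤ a := by
    have h1 : (1:ℤ) ≤ cfA x (m+1) := cfA_pos hx hirr (m+1)
    have : cfA x (m+1) = 1 ∨ 2 ≤ cfA x (m+1) := by omega
    rcases this with h | h
    · left; rw [hadef, h]; norm_num
    · right; rw [hadef]; exact_mod_cast h
  have hv' : 0 < 1/v - a := by rw [← ht2eq]; exact ht2m.1
  have hv'1 : 1/v - a < 1 := by rw [← ht2eq]; exact ht2m.2
  -- A1
  have A1 : 1 + u*v ≤ s*u := by
    have h1 : (1 + u*v) * (cfQ x (m+2) : ℝ) ≤ (s*u) * (cfQ x (m+2) : ℝ) := by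
      have e1 : (1 + u*v) * (cfQ x (m+2) : ℝ) = (cfQ x (m+2) : ℝ) + (cfQ x (m+1) : ℝ) * v := by
        linear_combination v * humul
      have e2 : (s*u) * (cfQ x (m+2) : ℝ) = s * (cfQ x (m+1) : ℝ) := by
        linear_combination s * humul
      rw [e1, e2]; exact I1
    exact le_of_mul_le_mul_right h1 hQ2pos
  -- A2
  have A2 : 1 + u*v ≤ s*v := by
    have hmul := mul_le_mul_of_nonneg_right I2 hv.le
    have htv : t2 * v = 1 - a*v := by
      rw [ht2eq]; field_simp
    have e1 : (cfQ x (m+3) : ℝ) * v = a * (cfQ x (m+2) : ℝ) * v + (cfQ x (m+1) : ℝ) * v := by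
      linear_combination v * recQ3
    have e2 : (cfQ x (m+2) : ℝ) * (t2 * v) = (cfQ x (m+2) : ℝ) - a * (cfQ x (m+2) : ℝ) * v := by
      linear_combination (cfQ x (m+2) : ℝ) * htv
    have e3 : u * (cfQ x (m+2) : ℝ) * v = (cfQ x (m+1) : ℝ) * v := by
      linear_combination v * humul
    have h1 : (1 + u*v) * (cfQ x (m+2) : ℝ) ≤ (s*v) * (cfQ x (m+2) : ℝ) := by
      nlinarith [hmul, e1, e2, e3]
    exact le_of_mul_le_mul_right h1 hQ2pos
  -- B
  have B : (a+u) + (1/v - a) ≤ s * ((1/v - a) * (a+u)) := by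
    rw [← ht2eq]
    have hmul := mul_le_mul_of_nonneg_right I3 ht2p.le
    have htt : t3 * t2 = 1 - a2*t2 := by
      rw [ht3eq]; field_simp
    have hQ3Q2 : (a + u) * (cfQ x (m+2) : ℝ) = (cfQ x (m+3) : ℝ) := by
      rw [recQ3]; linear_combination humul
    have f1 : (cfQ x (m+4) : ℝ) * t2 = a2 * (cfQ x (m+3) : ℝ) * t2 + (cfQ x (m+2) : ℝ) * t2 := by
      linear_combination t2 * recQ4
    have f2 : (cfQ x (m+3) : ℝ) * (t3 * t2) = (cfQ x (m+3) : ℝ) - a2 * (cfQ x (m+3) : ℝ) * t2 := by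
      linear_combination (cfQ x (m+3) : ℝ) * htt
    have hkey : (cfQ x (m+2) : ℝ) * t2 + (cfQ x (m+3) : ℝ) ≤ s * (cfQ x (m+3) : ℝ) * t2 := by
      nlinarith [hmul, f1, f2]
    have f3 : s * (t2 * (a+u)) * (cfQ x (m+2) : ℝ) = s * (cfQ x (m+3) : ℝ) * t2 := by
      linear_combination s * t2 * hQ3Q2
    have h1 : ((a+u) + t2) * (cfQ x (m+2) : ℝ) ≤ (s * (t2 * (a+u))) * (cfQ x (m+2) : ℝ) := by
      nlinarith [hkey, hQ3Q2, f3]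
    exact le_of_mul_le_mul_right h1 hQ2pos
  -- apply the algebra lemma
  have hufin : u = (s-1)/2 :=
    borel_algebra s u v a hs hs2 hs3 hu hu1 hv hv1 ha hao hv' hv'1 A1 A2 B
  -- contradiction with irrationality of sqrt 5
  have hirr5 : Irrational s := Nat.prime_five.irrational_sqrt
  have hseq : s = 2*u + 1 := by rw [hufin]; ring
  apply hirr5
  refine ⟨2 * ((cfQ x (m+1) : ℚ) / (cfQ x (m+2) : ℚ)) + 1, ?_⟩
  rw [hseq, hudef]
  push_cast
  ring
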